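/- arXiv:1707.05516 — 2 statements merged into one kernel-verified Lean document; each statement's English description precedes it below -/
import Mathlib

section
/- Let q be a power of a prime p and let k be a positive integer. The induced Dickson map D̄_k : F_q → F_q is a bijection (permutation of F_q) if and only if gcd(k, q² - 1) = 1. -/
/-!
Over an algebraic closure `K` of `F`, every element of `F` is `y + y⁻¹` for some `y ≠ 0`, and
`D_k (y + y⁻¹) = y ^ k + y⁻¹ ^ k`. Since `y + y⁻¹ = z + z⁻¹` iff `z ∈ {y, y⁻¹}`, the Frobenius
`a ↦ a ^ q` fixes `y + y⁻¹` iff `y ^ q ∈ {y, y⁻¹}`; so the `y` that occur are `(q² - 1)`-th roots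
of unity, and conversely every such root `y` with `y ^ q ∈ {y, y⁻¹}` gives an element of `F`.
If `k` is prime to `q² - 1`, then `y ↦ y ^ k` is injective on these roots, which makes `D̄_k`
injective. If a prime `ℓ` divides both, a primitive `ℓ`-th root of unity `ζ` gives
`D̄_k (ζ + ζ⁻¹) = 2 = D̄_k 2` although `ζ + ζ⁻¹ ≠ 2`.
-/

open Polynomial

lemma add_inv_eq_add_inv_iff {K : Type*} [Field K] {y z : K} (hy : y ≠ 0) (hz : z ≠ 0) :
    y + y⁻¹ = z + z⁻¹ ↔ z = y ∨ z = y⁻¹ := by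
  refine ⟨fun h ↦ ?_, by rintro (rfl | rfl) <;> simp [add_comm]⟩
  have hfactor : (z - y) * (y * z - 1) = 0 := by
    field_simp at h
    linear_combination -h
  rcases mul_eq_zero.mp hfactor with h | h
  · exact .inl (sub_eq_zero.mp h)
  · exact .inr (eq_inv_of_mul_eq_one_right (sub_eq_zero.mp h))

lemma exists_add_inv_eq {K : Type*} [Field K] [IsAlgClosed K] (a : K) :
    ∃ y ≠ 0, y + y⁻¹ = a := by
  obtain ⟨y, hy⟩ := IsAlgClosed.exists_root (C 1 * X ^ 2 + C (-a) * X + C 1)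
    (by rw [degree_quadratic one_ne_zero]; decide)
  have hy : y ^ 2 - a * y + 1 = 0 := by simpa [sub_eq_add_neg] using hy
  have hy0 : y ≠ 0 := by rintro rfl; simp at hy
  refine ⟨y, hy0, ?_⟩
  field_simp
  linear_combination hy

lemma eq_of_pow_eq_pow_of_coprime {G₀ : Type*} [CommGroupWithZero G₀] {y z : G₀} {k m : ℕ}
    (hkm : k.Coprime m) (hz : z ≠ 0) (hym : y ^ m = 1) (hzm : z ^ m = 1) (h : y ^ k = z ^ k) :
    y = z := by
  have : (y / z) ^ k.gcd m = 1 := pow_gcd_eq_one.mpr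
    ⟨by rw [div_pow, h, div_self (pow_ne_zero _ hz)], by rw [div_pow, hym, hzm, div_one]⟩
  rwa [hkm, pow_one, div_eq_one_iff_eq hz] at this

lemma pow_sq_sub_one_eq_one {G₀ : Type*} [GroupWithZero G₀] {y : G₀} (hy : y ≠ 0) {n : ℕ}
    (h : y ^ n = y ∨ y ^ n = y⁻¹) : y ^ (n ^ 2 - 1) = 1 := by
  obtain rfl | hn := n.eq_zero_or_pos
  · simp
  have hy' : y ^ (n ^ 2) = y := by
    rw [sq, pow_mul]
    rcases h with h | h <;> rw [h]
    · exact h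
    · rw [inv_pow, h, inv_inv]
  rw [pow_sub₀ y hy (Nat.one_le_pow _ _ hn), hy', pow_one, mul_inv_cancel₀ hy]

lemma pow_eq_self_or_pow_eq_inv {M : Type*} [DivisionMonoid M] {ζ : M} {ℓ n : ℕ} (hℓ : ℓ.Prime)
    (hn : 0 < n) (hζ : ζ ^ ℓ = 1) (hℓn : ℓ ∣ n ^ 2 - 1) : ζ ^ n = ζ ∨ ζ ^ n = ζ⁻¹ := by
  rw [← one_pow 2, Nat.sq_sub_sq, hℓ.dvd_mul] at hℓn
  rcases hℓn with ⟨t, ht⟩ | ⟨t, ht⟩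
  · refine .inr (eq_inv_of_mul_eq_one_left ?_)
    rw [← pow_succ, ht, pow_mul, hζ, one_pow]
  · left
    rw [← Nat.sub_one_add_one hn.ne', pow_succ, ht, pow_mul, hζ, one_pow, one_mul]

lemma aeval_dickson_one_one_add {R : Type*} [CommRing R] {x y : R} (h : x * y = 1) (k : ℕ) :
    aeval (x + y) (dickson 1 (1 : ℤ) k) = x ^ k + y ^ k := by
  rw [aeval_def, eval₂_eq_eval_map, map_dickson, map_one, dickson_one_one_eval_add_inv x y h]

lemma aeval_dickson_add_inv_eq_iff {K : Type*} [Field K] {y z : K} (hy : y ≠ 0) (hz : z ≠ 0)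
    (k : ℕ) :
    aeval (y + y⁻¹) (dickson 1 (1 : ℤ) k) = aeval (z + z⁻¹) (dickson 1 (1 : ℤ) k) ↔
      z ^ k = y ^ k ∨ z ^ k = (y ^ k)⁻¹ := by
  rw [aeval_dickson_one_one_add (mul_inv_cancel₀ hy), aeval_dickson_one_one_add
    (mul_inv_cancel₀ hz), inv_pow, inv_pow, add_inv_eq_add_inv_iff (pow_ne_zero _ hy)
    (pow_ne_zero _ hz)]

namespace FiniteField

lemma mem_range_algebraMap_of_pow_card_eq {F R : Type*} [Field F] [Fintype F] [CommRing R]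
    [IsDomain R] [Algebra F R] {a : R} (ha : a ^ Fintype.card F = a) :
    a ∈ (algebraMap F R).range := by
  refine (Polynomial.splits_X_pow_nat_card_sub_X (K := F)).mem_range_of_isRoot
    (X_pow_card_sub_X_ne_zero F Finite.one_lt_card) ?_
  simp [Nat.card_eq_fintype_card, ha]

lemma natCast_ne_zero_of_dvd_card_sq_sub_one {F : Type*} [Field F] [Fintype F] {ℓ : ℕ}
    (hℓ : ℓ ∣ Fintype.card F ^ 2 - 1) : (ℓ : F) ≠ 0 := by
  have hcast : ((Fintype.card F ^ 2 - 1 : ℕ) : F) = -1 := by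
    rw [Nat.cast_sub (Nat.one_le_pow _ _ Fintype.card_pos)]
    simp
  intro h
  simpa [h, hcast] using Nat.cast_dvd_cast (α := F) hℓ

section

variable {F K : Type*} [Field F] [Fintype F] [Field K] [Algebra F K]

lemma add_inv_mem_range_algebraMap_iff {y : K} (hy : y ≠ 0) :
    y + y⁻¹ ∈ (algebraMap F K).range ↔
      y ^ Fintype.card F = y ∨ y ^ Fintype.card F = y⁻¹ := by
  have hfrob : (y + y⁻¹) ^ Fintype.card F = y ^ Fintype.card F + (y ^ Fintype.card F)⁻¹ := by
    simpa using map_add (frobeniusAlgHom F K) y y⁻¹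
  constructor
  · rintro ⟨x, hx⟩
    rw [← add_inv_eq_add_inv_iff hy (pow_ne_zero _ hy), ← hfrob, ← hx, ← map_pow, pow_card]
  · intro h
    apply mem_range_algebraMap_of_pow_card_eq
    rcases h with h | h <;> rw [hfrob, h]
    rw [inv_inv, add_comm]

lemma pow_card_sq_sub_one_eq_one_of_add_inv_mem {y : K} (hy : y ≠ 0)
    (hmem : y + y⁻¹ ∈ (algebraMap F K).range) : y ^ (Fintype.card F ^ 2 - 1) = 1 :=
  pow_sq_sub_one_eq_one hy ((add_inv_mem_range_algebraMap_iff hy).mp hmem)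

end

variable {F : Type*} [Field F] [Fintype F] {k : ℕ}

theorem injective_aeval_dickson_of_coprime (hk : k.Coprime (Fintype.card F ^ 2 - 1)) :
    Function.Injective fun x : F ↦ aeval x (dickson 1 (1 : ℤ) k) := by
  intro x₁ x₂ hx
  let K := AlgebraicClosure F
  obtain ⟨y₁, hy₁, h₁⟩ := exists_add_inv_eq (algebraMap F K x₁)
  obtain ⟨y₂, hy₂, h₂⟩ := exists_add_inv_eq (algebraMap F K x₂)
  have hroot₁ := pow_card_sq_sub_one_eq_one_of_add_inv_mem hy₁ ⟨x₁, h₁.symm⟩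
  have hroot₂ := pow_card_sq_sub_one_eq_one_of_add_inv_mem hy₂ ⟨x₂, h₂.symm⟩
  have hK : aeval (y₁ + y₁⁻¹) (dickson 1 (1 : ℤ) k) =
      aeval (y₂ + y₂⁻¹) (dickson 1 (1 : ℤ) k) := by
    rw [h₁, h₂, aeval_algebraMap_apply, aeval_algebraMap_apply]
    exact congrArg _ hx
  apply (algebraMap F K).injective
  rw [← h₁, ← h₂, add_inv_eq_add_inv_iff hy₁ hy₂]
  rcases (aeval_dickson_add_inv_eq_iff hy₁ hy₂ k).mp hK with h | h
  · exact .inl (eq_of_pow_eq_pow_of_coprime hk hy₁ hroot₂ hroot₁ h)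
  · refine .inr (eq_of_pow_eq_pow_of_coprime hk (inv_ne_zero hy₁) hroot₂ ?_ (by rwa [inv_pow]))
    rw [inv_pow, hroot₁, inv_one]

theorem coprime_of_injective_aeval_dickson
    (hinj : Function.Injective fun x : F ↦ aeval x (dickson 1 (1 : ℤ) k)) :
    k.Coprime (Fintype.card F ^ 2 - 1) := by
  by_contra hk
  obtain ⟨ℓ, hℓ, hℓk, hℓq⟩ := Nat.Prime.not_coprime_iff_dvd.mp hk
  let K := AlgebraicClosure F
  -- `ℓ` is prime to the characteristic, so `K` contains a primitive `ℓ`-th root of unity.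
  have : NeZero (ℓ : F) := ⟨natCast_ne_zero_of_dvd_card_sq_sub_one hℓq⟩
  obtain ⟨ζ, hζ⟩ := HasEnoughRootsOfUnity.exists_primitiveRoot K ℓ
  have hζ0 : ζ ≠ 0 := hζ.ne_zero hℓ.ne_zero
  obtain ⟨x, hx⟩ := (add_inv_mem_range_algebraMap_iff hζ0).mpr
    (pow_eq_self_or_pow_eq_inv hℓ Fintype.card_pos hζ.pow_eq_one hℓq)
  have hD : aeval (ζ + ζ⁻¹) (dickson 1 (1 : ℤ) k) =
      aeval (1 + 1⁻¹ : K) (dickson 1 (1 : ℤ) k) :=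
    (aeval_dickson_add_inv_eq_iff hζ0 one_ne_zero k).mpr
      (.inl (by rw [one_pow, hζ.pow_eq_one_iff_dvd k |>.mpr hℓk]))
  have h2 : algebraMap F K 2 = 1 + 1⁻¹ := by rw [map_ofNat]; norm_num
  rw [← hx, ← h2, aeval_algebraMap_apply, aeval_algebraMap_apply] at hD
  have hx2 : x = 2 := hinj ((algebraMap F K).injective hD)
  have : ζ + ζ⁻¹ = 1 + 1⁻¹ := by rw [← hx, hx2, h2]
  rcases (add_inv_eq_add_inv_iff hζ0 one_ne_zero).mp this with h | h
  · exact hζ.ne_one hℓ.one_lt h.symm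
  · exact hζ.ne_one hℓ.one_lt (by simpa using h)

end FiniteField

theorem stmt_2_general (q k : ℕ)
    (F : Type) [Field F] [Fintype F] (hF : Fintype.card F = q) :
    Function.Bijective (fun x : F => Polynomial.aeval x (Polynomial.dickson 1 (1 : ℤ) k))
      ↔ Nat.gcd k (q ^ 2 - 1) = 1 := by
  subst hF
  rw [← Finite.injective_iff_bijective]
  exact ⟨FiniteField.coprime_of_injective_aeval_dickson,
    FiniteField.injective_aeval_dickson_of_coprime⟩

/-- the induced Dickson map `D̄_k : F_q → F_q` is a bijection if and only if
`gcd(k, q² - 1) = 1`. -/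
theorem stmt_2 (p n q k : ℕ) (hp : p.Prime) (hn : 0 < n) (hq : q = p ^ n) (hk : 0 < k)
    (F : Type) [Field F] [Fintype F] (hF : Fintype.card F = q) :
    Function.Bijective (fun x : F => Polynomial.aeval x (Polynomial.dickson 1 (1 : ℤ) k))
      ↔ Nat.gcd k (q ^ 2 - 1) = 1 :=
  stmt_2_general q k F hF
end

section
/- Let q ≥ 2 be a power of a prime. The subset of ℂ² given by the union S₁ ∪ S₂ ∪ S₃ ∪ S₄ ∪ S₅, where S₁ = {Φ_{B₂}(ζ,ξ) : ζ^{q-1} = 1, ξ^{q+1} = 1}, S₂ = {Φ_{B₂}(ζ,ξ) : ζ^{q-1} = ξ^{q-1} = 1}, S₃ = {Φ_{B₂}(ζ,ξ) : ζ^{q+1} = ξ^{q+1} = 1}, S₄ = {Φ_{B₂}(ζ, ζ^q) : ζ^{q²-1} = 1}, and S₅ = {Φ_{B₂}(ζ, ζ^q) : ζ^{q²+1} = 1}, has exactly q² elements. -/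
/-!
On the unit circle `u + u⁻¹ = 2 Re u`, so `Φ_{B₂}(u, v) = (2(x + y), 4xy)` with `x = Re u` and
`y = Re v`: for roots of unity, `Φ_{B₂}(u, v)` records exactly the unordered pair `{Re u, Re v}`.

Let `C` be the roots of unity of order dividing `q - 1` or `q + 1`, i.e. the `ζ ≠ 0` with
`ζ^q = ζ^{±1}`, and `D ⊇ C` those with `ζ^{q²} = ζ^{±1}`. Inversion pairs off the elements of `C`
other than `±1`, so `Re C` has `q` elements. On `D \ C`, a set of `2q² - 2q` elements,
`ζ ↦ (Re ζ, Re ζ^q)` is two-to-one with fibres `{ζ, ζ⁻¹}`; its values lie neither on the diagonal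
nor in `Re C × Re C`, and `ζ ↦ ζ^q` swaps their coordinates. Hence the five sets are the images of
`q² + (q² - q)` ordered pairs, closed under swapping and with `q` of them on the diagonal, which
form `q²` unordered pairs.
-/

/-- `Φ_{B₂}(u,v) = (u + u⁻¹ + v + v⁻¹, uv + (uv)⁻¹ + uv⁻¹ + u⁻¹v)`. -/
noncomputable def PhiB2 (u v : ℂ) : ℂ × ℂ :=
  (u + u⁻¹ + v + v⁻¹, u * v + (u * v)⁻¹ + u * v⁻¹ + u⁻¹ * v)

open Finset Polynomial

theorem Finset.two_mul_card_image_eq_card_add_card_fixed {α β : Type*} [DecidableEq α]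
    [DecidableEq β] {s : Finset α} {f : α → β} {σ : α → α} (hσ : ∀ a ∈ s, σ a ∈ s)
    (hfσ : ∀ a ∈ s, f (σ a) = f a) (hfib : ∀ a ∈ s, ∀ b ∈ s, f a = f b → b = a ∨ b = σ a) :
    2 * #(s.image f) = #s + #{a ∈ s | σ a = a} := by
  have hfiber : ∀ a ∈ s,
      #{b ∈ s | f b = f a} + #{b ∈ {b ∈ s | f b = f a} | σ b = b} = 2 := by
    intro a ha
    have hpair : {b ∈ s | f b = f a} = {a, σ a} := by
      ext b
      simp only [mem_filter, mem_insert, mem_singleton]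
      refine ⟨fun ⟨hb, hfb⟩ => hfib a ha b hb hfb.symm, ?_⟩
      rintro (rfl | rfl)
      exacts [⟨ha, rfl⟩, ⟨hσ a ha, hfσ a ha⟩]
    rw [hpair]
    by_cases hfix : σ a = a
    · simp [hfix, filter_singleton]
    · -- a fixed `σ a` would have the singleton fibre `{σ a}`, which contains `a`
      have hσfix : σ (σ a) ≠ σ a := fun h => by
        rcases hfib (σ a) (hσ a ha) a ha (hfσ a ha) with h' | h'
        exacts [hfix h'.symm, hfix (h'.trans h).symm]
      rw [card_pair (Ne.symm hfix), filter_insert, filter_singleton]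
      simp [hfix, hσfix]
  calc 2 * #(s.image f)
      = ∑ y ∈ s.image f, (#{b ∈ s | f b = y} + #{b ∈ {b ∈ s | f b = y} | σ b = b}) := by
        rw [sum_congr rfl fun y hy => ?_, sum_const, smul_eq_mul, mul_comm]
        obtain ⟨a, ha, rfl⟩ := mem_image.1 hy
        exact hfiber a ha
    _ = #s + #{a ∈ s | σ a = a} := by
        simp only [filter_comm (fun b => f b = _)]
        rw [sum_add_distrib, ← card_eq_sum_card_image, ← card_eq_sum_card_fiberwise]
        exact fun a ha => mem_image_of_mem f (mem_filter.1 ha).1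

namespace Complex

lemma eq_or_eq_inv_of_re_eq {u v : ℂ} (hu : ‖u‖ = 1) (hv : ‖v‖ = 1) (h : u.re = v.re) :
    v = u ∨ v = u⁻¹ := by
  have hu' := normSq_eq_norm_sq u
  have hv' := normSq_eq_norm_sq v
  rw [normSq_apply, hu, h] at hu'
  rw [normSq_apply, hv] at hv'
  rcases mul_self_eq_mul_self_iff.1 (show v.im * v.im = u.im * u.im by linarith) with him | him
  · exact .inl (ext h.symm him)
  · exact .inr (by rw [inv_eq_conj hu]; exact ext (by simpa using h.symm) (by simpa using him))

lemma re_inv_of_norm_eq_one {z : ℂ} (hz : ‖z‖ = 1) : z⁻¹.re = z.re := by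
  rw [inv_eq_conj hz, conj_re]

end Complex

lemma PhiB2_comm (u v : ℂ) : PhiB2 u v = PhiB2 v u := by
  simp only [PhiB2, Prod.mk.injEq]
  constructor <;> ring

noncomputable def phiRe (p : ℝ × ℝ) : ℂ × ℂ := (↑(2 * (p.1 + p.2)), ↑(4 * (p.1 * p.2)))

lemma PhiB2_eq_phiRe {u v : ℂ} (hu : ‖u‖ = 1) (hv : ‖v‖ = 1) : PhiB2 u v = phiRe (u.re, v.re) := by
  have hu' := Complex.add_conj u
  have hv' := Complex.add_conj v
  simp only [PhiB2, phiRe, mul_inv, Complex.inv_eq_conj hu, Complex.inv_eq_conj hv, Prod.mk.injEq]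
  push_cast at hu' hv' ⊢
  constructor
  · linear_combination hu' + hv'
  · linear_combination (v + (starRingEnd ℂ) v) * hu' + (2 * (u.re : ℂ)) * hv'

lemma phiRe_swap (p : ℝ × ℝ) : phiRe p.swap = phiRe p := by
  simp only [phiRe, Prod.fst_swap, Prod.snd_swap, add_comm, mul_comm]

lemma eq_or_eq_swap_of_phiRe_eq {p p' : ℝ × ℝ} (h : phiRe p = phiRe p') : p' = p ∨ p' = p.swap := by
  simp only [phiRe, Prod.mk.injEq, Complex.ofReal_inj] at h
  have : (p'.1 - p.1) * (p'.1 - p.2) = 0 := by linear_combination (-p'.1 / 2) * h.1 + h.2 / 4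
  rcases mul_eq_zero.1 this with h' | h'
  · exact .inl (Prod.ext (by linarith) (by linarith))
  · exact .inr (Prod.ext (by rw [Prod.fst_swap]; linarith) (by rw [Prod.snd_swap]; linarith))

lemma two_mul_card_image_of_inv_mem {β : Type*} [DecidableEq β] {s : Finset ℂ}
    (hs : ∀ z ∈ s, ‖z‖ = 1) (hinv : ∀ z ∈ s, z⁻¹ ∈ s) {f : ℂ → β}
    (hf_inv : ∀ z ∈ s, f z⁻¹ = f z) (hf : ∀ z ∈ s, ∀ w ∈ s, f z = f w → z.re = w.re) :
    2 * #(s.image f) = #s + #{z ∈ s | z ^ 2 = 1} := by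
  rw [two_mul_card_image_eq_card_add_card_fixed hinv hf_inv fun z hz w hw h =>
    Complex.eq_or_eq_inv_of_re_eq (hs z hz) (hs w hw) (hf z hz w hw h)]
  congr 2
  refine filter_congr fun z hz => ?_
  have hz0 : z ≠ 0 := norm_ne_zero_iff.1 (by rw [hs z hz]; exact one_ne_zero)
  rw [sq, mul_eq_one_iff_inv_eq₀ hz0]

section RootsOfUnity

variable {R : Type*} [CommRing R] [IsDomain R] {n : ℕ} {z : R}

lemma pos_of_mem_nthRootsFinset {a : R} (h : z ∈ nthRootsFinset n a) : 0 < n := by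
  rcases n.eq_zero_or_pos with rfl | hn
  · simp at h
  · exact hn

lemma pow_mem_nthRootsFinset (h : z ∈ nthRootsFinset n (1 : R)) (k : ℕ) :
    z ^ k ∈ nthRootsFinset n (1 : R) := by
  have hn := pos_of_mem_nthRootsFinset h
  rw [mem_nthRootsFinset hn] at h ⊢
  rw [← pow_mul, mul_comm, pow_mul, h, one_pow]

lemma inv_mem_nthRootsFinset {K : Type*} [Field K] {z : K} (h : z ∈ nthRootsFinset n (1 : K)) :
    z⁻¹ ∈ nthRootsFinset n (1 : K) := by
  have hn := pos_of_mem_nthRootsFinset h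
  rw [mem_nthRootsFinset hn] at h ⊢
  rw [inv_pow, h, inv_one]

lemma Complex.norm_eq_one_of_mem_nthRootsFinset {z : ℂ} (h : z ∈ nthRootsFinset n (1 : ℂ)) :
    ‖z‖ = 1 :=
  Complex.norm_eq_one_of_pow_eq_one ((mem_nthRootsFinset (pos_of_mem_nthRootsFinset h) 1).1 h)
    (pos_of_mem_nthRootsFinset h).ne'

lemma Complex.card_nthRootsFinset_one (hn : n ≠ 0) : #(nthRootsFinset n (1 : ℂ)) = n :=
  (Complex.isPrimitiveRoot_exp n hn).card_nthRootsFinset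

lemma sq_eq_one_of_mem_nthRootsFinset_of_mem_add_two (h : z ∈ nthRootsFinset n (1 : R))
    (h' : z ∈ nthRootsFinset (n + 2) (1 : R)) : z ^ 2 = 1 := by
  have hn := pos_of_mem_nthRootsFinset h
  rw [mem_nthRootsFinset hn] at h
  rw [mem_nthRootsFinset (by omega), pow_add, h, one_mul] at h'
  exact h'

lemma mem_nthRootsFinset_iff_of_sq_eq_one (hz : z ^ 2 = 1) {m : ℕ} (hm : 0 < m) (hn : 0 < n)
    (h : m % 2 = n % 2) : z ∈ nthRootsFinset m (1 : R) ↔ z ∈ nthRootsFinset n (1 : R) := by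
  rw [mem_nthRootsFinset hm, mem_nthRootsFinset hn, pow_eq_pow_mod m hz, h,
    ← pow_eq_pow_mod n hz]

end RootsOfUnity

section RootsPM

variable {n : ℕ} {z : ℂ}

noncomputable def rootsPM (n : ℕ) : Finset ℂ :=
  nthRootsFinset (n - 1) (1 : ℂ) ∪ nthRootsFinset (n + 1) (1 : ℂ)

lemma norm_eq_one_of_mem_rootsPM (h : z ∈ rootsPM n) : ‖z‖ = 1 :=
  (mem_union.1 h).elim Complex.norm_eq_one_of_mem_nthRootsFinset
    Complex.norm_eq_one_of_mem_nthRootsFinset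

lemma ne_zero_of_mem_rootsPM (h : z ∈ rootsPM n) : z ≠ 0 :=
  norm_ne_zero_iff.1 (by rw [norm_eq_one_of_mem_rootsPM h]; exact one_ne_zero)

lemma inv_mem_rootsPM (h : z ∈ rootsPM n) : z⁻¹ ∈ rootsPM n :=
  mem_union.2 ((mem_union.1 h).imp inv_mem_nthRootsFinset inv_mem_nthRootsFinset)

lemma pow_mem_rootsPM (h : z ∈ rootsPM n) (k : ℕ) : z ^ k ∈ rootsPM n :=
  mem_union.2 ((mem_union.1 h).imp (pow_mem_nthRootsFinset · k) (pow_mem_nthRootsFinset · k))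

lemma mem_rootsPM_iff (hn : 2 ≤ n) (hz : z ≠ 0) : z ∈ rootsPM n ↔ z ^ n = z ∨ z ^ n = z⁻¹ := by
  have hpow : z ^ n = z ^ (n - 1) * z := by rw [← pow_succ, Nat.sub_add_cancel (by omega)]
  rw [rootsPM, mem_union, mem_nthRootsFinset (by omega), mem_nthRootsFinset (by omega), pow_succ,
    mul_eq_one_iff_eq_inv₀ hz, hpow, mul_eq_right₀ hz]

lemma filter_sq_eq_one_rootsPM (hn : 2 ≤ n) :
    {z ∈ rootsPM n | z ^ 2 = 1} = nthRootsFinset (n - 1) (1 : ℂ) ∩ nthRootsFinset (n + 1) 1 := by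
  ext z
  simp only [rootsPM, mem_filter, mem_union, mem_inter]
  constructor
  · rintro ⟨h, hz⟩
    have := mem_nthRootsFinset_iff_of_sq_eq_one hz (m := n - 1) (n := n + 1) (by omega) (by omega)
      (by omega)
    tauto
  · rintro ⟨h, h'⟩
    refine ⟨.inl h, sq_eq_one_of_mem_nthRootsFinset_of_mem_add_two h ?_⟩
    rwa [show n - 1 + 2 = n + 1 by omega]

lemma card_rootsPM_add_card_filter_sq_eq_one (hn : 2 ≤ n) :
    #(rootsPM n) + #{z ∈ rootsPM n | z ^ 2 = 1} = 2 * n := by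
  rw [filter_sq_eq_one_rootsPM hn, rootsPM, card_union_add_card_inter,
    Complex.card_nthRootsFinset_one (by omega), Complex.card_nthRootsFinset_one (by omega)]
  omega

lemma card_image_re_rootsPM (hn : 2 ≤ n) : #((rootsPM n).image Complex.re) = n := by
  have h := two_mul_card_image_of_inv_mem (s := rootsPM n) (fun _ => norm_eq_one_of_mem_rootsPM)
    (fun _ => inv_mem_rootsPM) (fun _ hz => Complex.re_inv_of_norm_eq_one
      (norm_eq_one_of_mem_rootsPM hz)) fun _ _ _ _ h => h
  have := card_rootsPM_add_card_filter_sq_eq_one hn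
  omega

lemma re_notMem_image_re_rootsPM (hz : ‖z‖ = 1) (h : z ∉ rootsPM n) :
    z.re ∉ (rootsPM n).image Complex.re := by
  simp only [mem_image, not_exists, not_and]
  intro w hw hre
  rcases Complex.eq_or_eq_inv_of_re_eq (norm_eq_one_of_mem_rootsPM hw) hz hre with rfl | rfl
  exacts [h hw, h (inv_mem_rootsPM hw)]

end RootsPM

section Frobenius

variable {q : ℕ} {z : ℂ}

lemma Nat.sq_mod_two (q : ℕ) : q ^ 2 % 2 = q % 2 := by
  rcases Nat.mod_two_eq_zero_or_one q with h | h <;> simp [Nat.pow_mod, h]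

lemma rootsPM_subset_rootsPM_sq (hq : 2 ≤ q) : rootsPM q ⊆ rootsPM (q ^ 2) := by
  intro z hz
  have hz0 := ne_zero_of_mem_rootsPM hz
  rw [mem_rootsPM_iff (by nlinarith) hz0, sq, pow_mul]
  left
  rcases (mem_rootsPM_iff hq hz0).1 hz with h | h
  · rw [h, h]
  · rw [h, inv_pow, h, inv_inv]

lemma mem_rootsPM_sq_iff_of_sq_eq_one (hq : 2 ≤ q) (hz : z ^ 2 = 1) :
    z ∈ rootsPM (q ^ 2) ↔ z ∈ rootsPM q := by
  have hz0 : z ≠ 0 := by rintro rfl; simp at hz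
  rw [mem_rootsPM_iff (by nlinarith) hz0, mem_rootsPM_iff hq hz0, pow_eq_pow_mod (q ^ 2) hz,
    pow_eq_pow_mod q hz, Nat.sq_mod_two]

lemma card_rootsPM_sq_sdiff (hq : 2 ≤ q) : #(rootsPM (q ^ 2) \ rootsPM q) = 2 * q ^ 2 - 2 * q := by
  have hsq : {z ∈ rootsPM (q ^ 2) | z ^ 2 = 1} = {z ∈ rootsPM q | z ^ 2 = 1} := by
    ext z
    simp only [mem_filter, and_congr_left_iff]
    exact mem_rootsPM_sq_iff_of_sq_eq_one hq
  have hD := card_rootsPM_add_card_filter_sq_eq_one (n := q ^ 2) (by nlinarith)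
  have hC := card_rootsPM_add_card_filter_sq_eq_one hq
  rw [hsq] at hD
  rw [card_sdiff_of_subset (rootsPM_subset_rootsPM_sq hq)]
  omega

lemma pow_mem_rootsPM_sq_sdiff (hq : 2 ≤ q) (hz : z ∈ rootsPM (q ^ 2) \ rootsPM q) :
    z ^ q ∈ rootsPM (q ^ 2) \ rootsPM q := by
  obtain ⟨hD, hC⟩ := mem_sdiff.1 hz
  refine mem_sdiff.2 ⟨pow_mem_rootsPM hD q, fun h => hC ?_⟩
  have hzq := pow_mem_rootsPM h q
  rw [← pow_mul, ← sq] at hzq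
  rcases (mem_rootsPM_iff (by nlinarith) (ne_zero_of_mem_rootsPM hD)).1 hD with h' | h' <;>
    rw [h'] at hzq
  exacts [hzq, inv_inv z ▸ inv_mem_rootsPM hzq]

lemma inv_mem_rootsPM_sq_sdiff (hz : z ∈ rootsPM (q ^ 2) \ rootsPM q) :
    z⁻¹ ∈ rootsPM (q ^ 2) \ rootsPM q := by
  obtain ⟨hD, hC⟩ := mem_sdiff.1 hz
  exact mem_sdiff.2 ⟨inv_mem_rootsPM hD, fun h => hC (inv_inv z ▸ inv_mem_rootsPM h)⟩

lemma re_pow_ne_re_of_mem_sdiff (hq : 2 ≤ q) (hz : z ∈ rootsPM (q ^ 2) \ rootsPM q) :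
    (z ^ q).re ≠ z.re := by
  obtain ⟨hD, hC⟩ := mem_sdiff.1 hz
  have hz1 := norm_eq_one_of_mem_rootsPM hD
  refine fun h => hC ((mem_rootsPM_iff hq (ne_zero_of_mem_rootsPM hD)).2 ?_)
  exact Complex.eq_or_eq_inv_of_re_eq hz1 (by rw [norm_pow, hz1, one_pow]) h.symm

def frobPair (q : ℕ) (z : ℂ) : ℝ × ℝ := (z.re, (z ^ q).re)

lemma frobPair_inv (hz : ‖z‖ = 1) : frobPair q z⁻¹ = frobPair q z := by
  rw [frobPair, frobPair, inv_pow, Complex.re_inv_of_norm_eq_one hz,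
    Complex.re_inv_of_norm_eq_one (by rw [norm_pow, hz, one_pow])]

lemma swap_frobPair (hq : 2 ≤ q) (hz : z ∈ rootsPM (q ^ 2)) :
    (frobPair q z).swap = frobPair q (z ^ q) := by
  rw [frobPair, frobPair, Prod.swap_prod_mk, ← pow_mul, ← sq]
  rcases (mem_rootsPM_iff (by nlinarith) (ne_zero_of_mem_rootsPM hz)).1 hz with h | h
  · rw [h]
  · rw [h, Complex.re_inv_of_norm_eq_one (norm_eq_one_of_mem_rootsPM hz)]

lemma two_mul_card_image_frobPair (hq : 2 ≤ q) :
    2 * #((rootsPM (q ^ 2) \ rootsPM q).image (frobPair q)) = 2 * q ^ 2 - 2 * q := by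
  have hnorm : ∀ z ∈ rootsPM (q ^ 2) \ rootsPM q, ‖z‖ = 1 :=
    fun z hz => norm_eq_one_of_mem_rootsPM (mem_sdiff.1 hz).1
  have hsq : {z ∈ rootsPM (q ^ 2) \ rootsPM q | z ^ 2 = 1} = ∅ := by
    refine filter_eq_empty_iff.2 fun z hz h2 => (mem_sdiff.1 hz).2 ?_
    exact (mem_rootsPM_sq_iff_of_sq_eq_one hq h2).1 (mem_sdiff.1 hz).1
  rw [two_mul_card_image_of_inv_mem hnorm (fun _ => inv_mem_rootsPM_sq_sdiff)
    (fun z hz => frobPair_inv (hnorm z hz)) (fun _ _ _ _ h => congrArg Prod.fst h),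
    card_rootsPM_sq_sdiff hq, hsq, card_empty, add_zero]

noncomputable def rePairs (q : ℕ) : Finset (ℝ × ℝ) :=
  (rootsPM q).image Complex.re ×ˢ (rootsPM q).image Complex.re ∪
    (rootsPM (q ^ 2) \ rootsPM q).image (frobPair q)

lemma card_rePairs (hq : 2 ≤ q) :
    #(rePairs q) = q ^ 2 + #((rootsPM (q ^ 2) \ rootsPM q).image (frobPair q)) := by
  rw [rePairs, card_union_of_disjoint, card_product, card_image_re_rootsPM hq, sq]
  refine disjoint_left.2 fun p hp hp' => ?_
  obtain ⟨z, hz, rfl⟩ := mem_image.1 hp'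
  exact re_notMem_image_re_rootsPM (norm_eq_one_of_mem_rootsPM (mem_sdiff.1 hz).1)
    (mem_sdiff.1 hz).2 (mem_product.1 hp).1

lemma swap_mem_rePairs (hq : 2 ≤ q) {p : ℝ × ℝ} (hp : p ∈ rePairs q) : p.swap ∈ rePairs q := by
  rcases mem_union.1 hp with hp | hp
  · exact mem_union_left _ (mem_product.2 (mem_product.1 hp).symm)
  · obtain ⟨z, hz, rfl⟩ := mem_image.1 hp
    rw [swap_frobPair hq (mem_sdiff.1 hz).1]
    exact mem_union_right _ (mem_image_of_mem _ (pow_mem_rootsPM_sq_sdiff hq hz))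

lemma filter_swap_eq_rePairs (hq : 2 ≤ q) :
    {p ∈ rePairs q | p.swap = p} = ((rootsPM q).image Complex.re).diag := by
  ext p
  have hswap : p.swap = p ↔ p.1 = p.2 := by
    rw [Prod.ext_iff, Prod.fst_swap, Prod.snd_swap, eq_comm (a := p.2), and_self]
  rw [mem_filter, mem_diag, hswap, rePairs, mem_union, mem_product]
  constructor
  · rintro ⟨⟨hp, -⟩ | hp, hdiag⟩
    · exact ⟨hp, hdiag⟩
    · obtain ⟨z, hz, rfl⟩ := mem_image.1 hp
      exact absurd hdiag.symm (re_pow_ne_re_of_mem_sdiff hq hz)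
  · rintro ⟨hp, hdiag⟩
    exact ⟨.inl ⟨hp, hdiag ▸ hp⟩, hdiag⟩

lemma card_image_phiRe_rePairs (hq : 2 ≤ q) : #((rePairs q).image phiRe) = q ^ 2 := by
  have h := two_mul_card_image_eq_card_add_card_fixed (fun _ => swap_mem_rePairs hq)
    (fun p _ => phiRe_swap p) fun _ _ _ _ => eq_or_eq_swap_of_phiRe_eq
  rw [filter_swap_eq_rePairs hq, diag_card, card_image_re_rootsPM hq, card_rePairs hq] at h
  have := two_mul_card_image_frobPair hq
  have : q ≤ q ^ 2 := Nat.le_self_pow two_ne_zero q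
  omega

lemma PhiB2_mem_image_rePairs {ζ ξ : ℂ} (hζ : ζ ∈ rootsPM q) (hξ : ξ ∈ rootsPM q) :
    PhiB2 ζ ξ ∈ (rePairs q).image phiRe := by
  rw [PhiB2_eq_phiRe (norm_eq_one_of_mem_rootsPM hζ) (norm_eq_one_of_mem_rootsPM hξ)]
  exact mem_image_of_mem _ (mem_union_left _ (mem_product.2
    ⟨mem_image_of_mem _ hζ, mem_image_of_mem _ hξ⟩))

lemma PhiB2_pow_mem_image_rePairs {ζ : ℂ} (hζ : ζ ∈ rootsPM (q ^ 2)) :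
    PhiB2 ζ (ζ ^ q) ∈ (rePairs q).image phiRe := by
  by_cases hC : ζ ∈ rootsPM q
  · exact PhiB2_mem_image_rePairs hC (pow_mem_rootsPM hC q)
  · have hζ1 := norm_eq_one_of_mem_rootsPM hζ
    rw [PhiB2_eq_phiRe hζ1 (by rw [norm_pow, hζ1, one_pow])]
    exact mem_image_of_mem _ (mem_union_right _ (mem_image_of_mem (frobPair q)
      (mem_sdiff.2 ⟨hζ, hC⟩)))

lemma setOf_union_eq_image_rePairs (hq : 2 ≤ q) :
    {xy : ℂ × ℂ | ∃ ζ ξ : ℂ, ζ ^ (q - 1) = 1 ∧ ξ ^ (q + 1) = 1 ∧ xy = PhiB2 ζ ξ}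
      ∪ {xy : ℂ × ℂ | ∃ ζ ξ : ℂ, ζ ^ (q - 1) = 1 ∧ ξ ^ (q - 1) = 1 ∧ xy = PhiB2 ζ ξ}
      ∪ {xy : ℂ × ℂ | ∃ ζ ξ : ℂ, ζ ^ (q + 1) = 1 ∧ ξ ^ (q + 1) = 1 ∧ xy = PhiB2 ζ ξ}
      ∪ {xy : ℂ × ℂ | ∃ ζ : ℂ, ζ ^ (q ^ 2 - 1) = 1 ∧ xy = PhiB2 ζ (ζ ^ q)}
      ∪ {xy : ℂ × ℂ | ∃ ζ : ℂ, ζ ^ (q ^ 2 + 1) = 1 ∧ xy = PhiB2 ζ (ζ ^ q)}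
      = ↑((rePairs q).image phiRe) := by
  have hq2 : 4 ≤ q ^ 2 := by nlinarith
  simp only [← mem_nthRootsFinset (show 0 < q - 1 by omega) (1 : ℂ),
    ← mem_nthRootsFinset (show 0 < q + 1 by omega) (1 : ℂ),
    ← mem_nthRootsFinset (show 0 < q ^ 2 - 1 by omega) (1 : ℂ),
    ← mem_nthRootsFinset (show 0 < q ^ 2 + 1 by omega) (1 : ℂ)]
  ext x
  simp only [Set.mem_union, Set.mem_ofPred_eq, mem_coe]
  constructor
  · rintro ((((⟨ζ, ξ, hζ, hξ, rfl⟩ | ⟨ζ, ξ, hζ, hξ, rfl⟩) | ⟨ζ, ξ, hζ, hξ, rfl⟩) | ⟨ζ, hζ, rfl⟩) |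
      ⟨ζ, hζ, rfl⟩)
    · exact PhiB2_mem_image_rePairs (mem_union_left _ hζ) (mem_union_right _ hξ)
    · exact PhiB2_mem_image_rePairs (mem_union_left _ hζ) (mem_union_left _ hξ)
    · exact PhiB2_mem_image_rePairs (mem_union_right _ hζ) (mem_union_right _ hξ)
    · exact PhiB2_pow_mem_image_rePairs (mem_union_left _ hζ)
    · exact PhiB2_pow_mem_image_rePairs (mem_union_right _ hζ)
  · intro hx
    obtain ⟨p, hp, rfl⟩ := mem_image.1 hx
    rcases mem_union.1 hp with hp | hp
    · obtain ⟨⟨ζ, hζ, h1⟩, ⟨ξ, hξ, h2⟩⟩ := (mem_product.1 hp).imp mem_image.1 mem_image.1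
      obtain rfl : p = (ζ.re, ξ.re) := Prod.ext h1.symm h2.symm
      rw [← PhiB2_eq_phiRe (norm_eq_one_of_mem_rootsPM hζ) (norm_eq_one_of_mem_rootsPM hξ)]
      rcases mem_union.1 hζ with hζ | hζ <;> rcases mem_union.1 hξ with hξ | hξ
      · exact .inl (.inl (.inl (.inr ⟨ζ, ξ, hζ, hξ, rfl⟩)))
      · exact .inl (.inl (.inl (.inl ⟨ζ, ξ, hζ, hξ, rfl⟩)))
      · exact .inl (.inl (.inl (.inl ⟨ξ, ζ, hξ, hζ, PhiB2_comm ζ ξ⟩)))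
      · exact .inl (.inl (.inr ⟨ζ, ξ, hζ, hξ, rfl⟩))
    · obtain ⟨ζ, hζ, rfl⟩ := mem_image.1 hp
      have hζ1 := norm_eq_one_of_mem_rootsPM (mem_sdiff.1 hζ).1
      rw [frobPair, ← PhiB2_eq_phiRe hζ1 (by rw [norm_pow, hζ1, one_pow])]
      rcases mem_union.1 (mem_sdiff.1 hζ).1 with hζ | hζ
      exacts [.inl (.inr ⟨ζ, hζ, rfl⟩), .inr ⟨ζ, hζ, rfl⟩]

end Frobenius

/-- for a prime power `q ≥ 2`, the union `S₁ ∪ S₂ ∪ S₃ ∪ S₄ ∪ S₅ ⊆ ℂ²`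
has exactly `q²` elements. -/
theorem stmt_10 (q : ℕ) (hq : IsPrimePow q) :
    ({xy : ℂ × ℂ | ∃ ζ ξ : ℂ, ζ ^ (q - 1) = 1 ∧ ξ ^ (q + 1) = 1 ∧ xy = PhiB2 ζ ξ}
      ∪ {xy : ℂ × ℂ | ∃ ζ ξ : ℂ, ζ ^ (q - 1) = 1 ∧ ξ ^ (q - 1) = 1 ∧ xy = PhiB2 ζ ξ}
      ∪ {xy : ℂ × ℂ | ∃ ζ ξ : ℂ, ζ ^ (q + 1) = 1 ∧ ξ ^ (q + 1) = 1 ∧ xy = PhiB2 ζ ξ}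
      ∪ {xy : ℂ × ℂ | ∃ ζ : ℂ, ζ ^ (q ^ 2 - 1) = 1 ∧ xy = PhiB2 ζ (ζ ^ q)}
      ∪ {xy : ℂ × ℂ | ∃ ζ : ℂ, ζ ^ (q ^ 2 + 1) = 1 ∧ xy = PhiB2 ζ (ζ ^ q)}).ncard
      = q ^ 2 := by
  rw [setOf_union_eq_image_rePairs hq.two_le, Set.ncard_coe_finset,
    card_image_phiRe_rePairs hq.two_le]
end
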